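/- Let ξ : 𝔤 → 𝔥 be a Lie algebra homomorphism between finite-dimensional Euclidean Lie algebras. Suppose that for every u ∈ 𝔤, ad_u is skew-symmetric with respect to ⟨·,·⟩_𝔤 (i.e., the metric on 𝔤 is bi-invariant) and ξ is surjective. Then the tension vector τ(ξ) = U^ξ − ξ(U^𝔤) vanishes, where U^ξ = Σ_i B_{ξ(e_i)} ξ(e_i) for an orthonormal basis (e_i) of 𝔤, B the Levi-Civita product of 𝔥, and U^𝔤 ∈ 𝔤 is determined by ⟨U^𝔤, v⟩ = tr(ad_v). -/

import Mathlib

/-!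
Since the metric on `𝔤` is bi-invariant, every `ad_v` is skew, so `tr ad_v = 0` and `U^𝔤 = 0`.
The Koszul formula gives `⟨B_u u, w⟩ = ⟨[w, u], u⟩`; for `w = ξ x` this turns `⟨U^ξ, w⟩` into
`∑ᵢ Q(ad_x eᵢ, eᵢ)` for the symmetric form `Q = ⟨ξ ·, ξ ·⟩_𝔥` on `𝔤`, which vanishes because `ad_x` is
skew. As `ξ` is onto, `U^ξ` is orthogonal to all of `𝔥`, hence zero.
-/

namespace LinearMap.BilinForm

section Orthonormal

variable {R M ι : Type*} [CommRing R] [AddCommGroup M] [Module R M] [Fintype ι] [DecidableEq ι]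
  {φ : LinearMap.BilinForm R M} {b : Module.Basis ι R M}

theorem basis_repr_eq_apply_left (hb : ∀ i j, φ (b i) (b j) = if i = j then 1 else 0)
    (v : M) (i : ι) : b.repr v i = φ v (b i) :=
  calc b.repr v i = φ (∑ j, b.repr v j • b j) (b i) := by
        simp only [map_sum, map_smul, LinearMap.sum_apply, LinearMap.smul_apply, hb, smul_eq_mul,
          mul_ite, mul_one, mul_zero, Finset.sum_ite_eq', Finset.mem_univ, if_true]
    _ = φ v (b i) := by rw [b.sum_repr]

theorem basis_repr_eq_apply_right (hb : ∀ i j, φ (b i) (b j) = if i = j then 1 else 0)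
    (v : M) (i : ι) : b.repr v i = φ (b i) v :=
  calc b.repr v i = φ (b i) (∑ j, b.repr v j • b j) := by
        simp only [map_sum, map_smul, hb, smul_eq_mul, mul_ite, mul_one, mul_zero,
          Finset.sum_ite_eq, Finset.mem_univ, if_true]
    _ = φ (b i) v := by rw [b.sum_repr]

theorem eq_zero_of_forall_apply_eq_zero (hb : ∀ i j, φ (b i) (b j) = if i = j then 1 else 0)
    {v : M} (hv : ∀ w, φ v w = 0) : v = 0 := by
  rw [← b.sum_repr v]
  simp [basis_repr_eq_apply_left hb, hv]

variable [NoZeroDivisors R] [CharZero R]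

theorem trace_eq_zero_of_skew (hb : ∀ i j, φ (b i) (b j) = if i = j then 1 else 0)
    {f : M →ₗ[R] M} (hf : ∀ x y, φ (f x) y + φ x (f y) = 0) : trace R M f = 0 := by
  have hleft : trace R M f = ∑ i, φ (f (b i)) (b i) := by
    simp [trace_eq_matrix_trace R b, Matrix.trace, LinearMap.toMatrix_apply,
      basis_repr_eq_apply_left hb]
  have hright : trace R M f = ∑ i, φ (b i) (f (b i)) := by
    simp [trace_eq_matrix_trace R b, Matrix.trace, LinearMap.toMatrix_apply,
      basis_repr_eq_apply_right hb]
  rw [← add_self_eq_zero]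
  calc trace R M f + trace R M f = ∑ i, (φ (f (b i)) (b i) + φ (b i) (f (b i))) := by
        rw [Finset.sum_add_distrib, ← hleft, ← hright]
    _ = 0 := by simp [hf]

theorem sum_apply_skew_basis_eq_zero (hb : ∀ i j, φ (b i) (b j) = if i = j then 1 else 0)
    {f : M →ₗ[R] M} (hf : ∀ x y, φ (f x) y + φ x (f y) = 0)
    {Q : LinearMap.BilinForm R M} (hQ : ∀ x y, Q x y = Q y x) : ∑ i, Q (f (b i)) (b i) = 0 := by
  set A : ι → ι → R := fun i j => φ (f (b i)) (b j)
  have hA : ∀ i j, A i j = -A j i := fun i j => by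
    rw [eq_neg_iff_add_eq_zero, add_comm]
    simp only [A]
    rw [← basis_repr_eq_apply_left hb (f (b i)) j, basis_repr_eq_apply_right hb]
    exact hf (b j) (b i)
  have hexpand : ∑ i, Q (f (b i)) (b i) = ∑ i, ∑ j, A i j * Q (b j) (b i) := by
    refine Finset.sum_congr rfl fun i _ => ?_
    conv_lhs => rw [← b.sum_repr (f (b i))]
    simp [A, basis_repr_eq_apply_left hb]
  rw [← CharZero.eq_neg_self_iff, hexpand]
  conv_lhs => rw [Finset.sum_comm]
  rw [← Finset.sum_neg_distrib]
  refine Finset.sum_congr rfl fun j _ => ?_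
  rw [← Finset.sum_neg_distrib]
  refine Finset.sum_congr rfl fun i _ => ?_
  rw [hA, hQ]
  ring

end Orthonormal

section Koszul

variable {R L : Type*} [CommRing R] [NoZeroDivisors R] [CharZero R] [LieRing L] [LieAlgebra R L]

theorem koszul_apply_self {ψ : LinearMap.BilinForm R L} {B : L →ₗ[R] L →ₗ[R] L}
    (hB : ∀ u v w, 2 * ψ (B u v) w = ψ ⁅u, v⁆ w + ψ ⁅w, u⁆ v + ψ ⁅w, v⁆ u) (u w : L) :
    ψ (B u u) w = ψ ⁅w, u⁆ u := by
  have h := hB u u w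
  rw [lie_self, map_zero, LinearMap.zero_apply, zero_add, ← two_mul] at h
  exact mul_left_cancel₀ two_ne_zero h

end Koszul

end LinearMap.BilinForm

open LinearMap.BilinForm in
theorem stmt_4_general {g h : Type*}
    [LieRing g] [LieAlgebra ℝ g]
    [LieRing h] [LieAlgebra ℝ h]
    {ι : Type*} [Fintype ι] [DecidableEq ι]
    (ipg : LinearMap.BilinForm ℝ g)
    (iph : LinearMap.BilinForm ℝ h)
    (hhsymm : ∀ x y : h, iph x y = iph y x)
    (hhpos : ∀ x : h, x ≠ 0 → 0 < iph x x)
    (ξ : g →ₗ⁅ℝ⁆ h)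
    (hbi : ∀ u x y : g, ipg ⁅u, x⁆ y + ipg x ⁅u, y⁆ = 0)
    (hsurj : Function.Surjective ξ)
    (B : h →ₗ[ℝ] h →ₗ[ℝ] h)
    (hB : ∀ u v w : h, 2 * iph (B u v) w = iph ⁅u, v⁆ w + iph ⁅w, u⁆ v + iph ⁅w, v⁆ u)
    (b : Module.Basis ι ℝ g)
    (hb : ∀ i j, ipg (b i) (b j) = if i = j then 1 else 0)
    (Ug : g) (hUg : ∀ v : g, ipg Ug v = LinearMap.trace ℝ g (LieAlgebra.ad ℝ g v)) :
    (∑ i, B (ξ (b i)) (ξ (b i))) - ξ Ug = 0 := by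
  have hUg0 : Ug = 0 :=
    eq_zero_of_forall_apply_eq_zero hb fun v => (hUg v).trans (trace_eq_zero_of_skew hb (hbi v))
  rw [hUg0, map_zero, sub_zero]
  set z := ∑ i, B (ξ (b i)) (ξ (b i))
  have horth : ∀ w, iph z w = 0 := by
    intro w
    obtain ⟨x, rfl⟩ := hsurj w
    have hQ : ∀ y y' : g, iph.compl₁₂ ξ.toLinearMap ξ.toLinearMap y y' =
        iph.compl₁₂ ξ.toLinearMap ξ.toLinearMap y' y := fun y y' => hhsymm _ _
    simpa [z, koszul_apply_self hB] using
      sum_apply_skew_basis_eq_zero hb (f := LieAlgebra.ad ℝ g x) (hbi x) hQ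
  by_contra hz
  simpa [horth z] using hhpos z hz

/-- If the metric on 𝔤 is bi-invariant (all ad_u skew-symmetric) and the Lie algebra
homomorphism ξ is surjective, then the tension τ(ξ) = U^ξ − ξ(U^𝔤) vanishes. -/
theorem stmt_4 {g h : Type*}
    [LieRing g] [LieAlgebra ℝ g] [FiniteDimensional ℝ g]
    [LieRing h] [LieAlgebra ℝ h] [FiniteDimensional ℝ h]
    {ι : Type*} [Fintype ι] [DecidableEq ι]
    (ipg : LinearMap.BilinForm ℝ g)
    (hgsymm : ∀ x y : g, ipg x y = ipg y x)
    (hgpos : ∀ x : g, x ≠ 0 → 0 < ipg x x)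
    (iph : LinearMap.BilinForm ℝ h)
    (hhsymm : ∀ x y : h, iph x y = iph y x)
    (hhpos : ∀ x : h, x ≠ 0 → 0 < iph x x)
    (ξ : g →ₗ⁅ℝ⁆ h)
    (hbi : ∀ u x y : g, ipg ⁅u, x⁆ y + ipg x ⁅u, y⁆ = 0)
    (hsurj : Function.Surjective ξ)
    (B : h →ₗ[ℝ] h →ₗ[ℝ] h)
    (hB : ∀ u v w : h, 2 * iph (B u v) w = iph ⁅u, v⁆ w + iph ⁅w, u⁆ v + iph ⁅w, v⁆ u)
    (b : Module.Basis ι ℝ g)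
    (hb : ∀ i j, ipg (b i) (b j) = if i = j then 1 else 0)
    (Ug : g) (hUg : ∀ v : g, ipg Ug v = LinearMap.trace ℝ g (LieAlgebra.ad ℝ g v)) :
    (∑ i, B (ξ (b i)) (ξ (b i))) - ξ Ug = 0 :=
  stmt_4_general ipg iph hhsymm hhpos ξ hbi hsurj B hB b hb Ug hUg
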